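/- Let 0 < λ < 1, χ ≥ 1, and suppose λ ≥ (b(K) + χ c(K)) / (χ b(K) + c(K)). Let κ_X^{KK} = (λ b(K) − c(K))/(1+λ) and κ_Y^{KK} = (b(K) − λ c(K))/(1+λ), and let κ_X, κ_Y ∈ ℝ satisfy κ_X ≤ χκ_Y ≤ κ_X + (χκ_Y^{KK} − κ_X^{KK}); set γ := χκ_Y − κ_X. Suppose p_0 ∈ [0,1] satisfies max{ (λ(b(K)+χc(K)) + (1+λ)γ)/((1−λ²)(χ b(K)+c(K))) − λ²/(1−λ²), 0 } ≤ p_0 ≤ min{ γ/((1−λ)(χ b(K)+c(K))), 1 }, and define p(y) := (λ(b(y)+χ c(y)) + (1+λ)γ)/(λ²(χ b(K)+c(K))) − ((1−λ²)/λ²) p_0 for y ∈ [0,K]. Then 0 ≤ p(y) ≤ 1 for all y ∈ [0,K], and the two-point memory-one strategy σ_X^0 = p_0 δ_K + (1−p_0) δ_0, σ_X[x,y] = p(y) δ_K + (1−p(y)) δ_0 satisfies, with ψ(s) := −χ b(s) − c(s), the identity (−c(x) − χ b(x) + γ) + λ(b(y) + χ c(y) + γ) = ψ(x) − λ² ∫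 ψ dσ_X[x,y] − (1−λ²) ∫ ψ dσ_X^0 for all x, y ∈ [0,K]. Consequently, in the strictly-alternating continuous Donation Game in which X moves first, this strategy unilaterally enforces π_X − κ_X = χ(π_Y − κ_Y). -/

import Mathlib

/-!
Write `ψ(s) = -χ b(s) - c(s)` and `A_t = ∫ ψ(x) dν_t` for the law of X's `t`-th move. Since
`σ_X` drives the next move of X, `∫∫ ψ dσ_X[x,y] dν_t = A_{t+1}`; integrating the autocratic
identity against `ν_t` and summing with weights `λ^{2t}` therefore telescopes to `0`, which is
`π_X - χ π_Y + γ = 0`. For the two-point strategy `∫ ψ dσ_X[x,y] = p(y) ψ(K)` because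
`ψ(0) = 0`, so the identity is an algebraic consequence of the formula for `p`, and the bounds on
`p₀` are exactly what keeps `p(y)` in `[0,1]`.
-/

open MeasureTheory ProbabilityTheory

lemma integral_comp_eq_integral_integral {α β E : Type*} [MeasurableSpace α] [MeasurableSpace β]
    [NormedAddCommGroup E] [NormedSpace ℝ E] (μ : Measure α) (κ : Kernel α β) {f : β → E}
    (hf : Integrable f (κ ∘ₘ μ)) :
    ∫ y, f y ∂(κ ∘ₘ μ) = ∫ x, ∫ y, f y ∂κ x ∂μ := by
  have h := Kernel.integral_comp (η := κ) (κ := Kernel.const Unit μ) (a := ())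
    (by rwa [← Measure.comp_eq_comp_const_apply])
  rwa [← Measure.comp_eq_comp_const_apply, Kernel.const_apply] at h

namespace MeasureTheory.Measure

lemma fst_eq_of_apply_prod_univ {α β : Type*} [MeasurableSpace α] [MeasurableSpace β]
    {μ : Measure (α × β)} {ρ : Measure α}
    (h : ∀ E, MeasurableSet E → μ (E ×ˢ Set.univ) = ρ E) : μ.fst = ρ :=
  Measure.ext fun E hE => by rw [fst_apply hE, ← Set.prod_univ, h E hE]

lemma fst_eq_comp_of_apply_prod_univ {α β γ : Type*} [MeasurableSpace α]
    [MeasurableSpace β] [MeasurableSpace γ] {μ : Measure (α × β)} {ρ : Measure γ}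
    {κ : Kernel γ α} (h : ∀ E, MeasurableSet E → μ (E ×ˢ Set.univ) = ∫⁻ q, κ q E ∂ρ) :
    μ.fst = κ ∘ₘ ρ :=
  fst_eq_of_apply_prod_univ fun E hE => by
    rw [bind_apply hE κ.aemeasurable, h E hE]

end MeasureTheory.Measure

section Series

variable {r : ℝ}

lemma summable_pow_mul_of_abs_le (hr0 : 0 ≤ r) (hr1 : r < 1) {w : ℕ → ℝ} {C : ℝ}
    (hw : ∀ t, |w t| ≤ C) :
    Summable fun t => r ^ t * w t := by
  refine Summable.of_norm_bounded ((summable_geometric_of_lt_one hr0 hr1).mul_right C) fun t => ?_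
  rw [norm_mul, norm_pow, Real.norm_of_nonneg hr0, Real.norm_eq_abs]
  exact mul_le_mul_of_nonneg_left (hw t) (by positivity)

lemma tsum_pow_mul_telescope (hr0 : 0 ≤ r) (hr1 : r < 1) {A : ℕ → ℝ} {C : ℝ}
    (hA : ∀ t, |A t| ≤ C) :
    ∑' t, r ^ t * (A t - r * A (t + 1) - (1 - r) * A 0) = 0 := by
  have hs := summable_pow_mul_of_abs_le hr0 hr1 hA
  have hs' : Summable fun t => r ^ (t + 1) * A (t + 1) := (summable_nat_add_iff 1).mpr hs
  have hgeo : ∑' t : ℕ, r ^ t * ((1 - r) * A 0) = A 0 := by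
    rw [tsum_mul_right, tsum_geometric_of_lt_one hr0 hr1]
    field_simp [(by linarith : (1 - r) ≠ 0)]
  have hsplit : (fun t => r ^ t * (A t - r * A (t + 1) - (1 - r) * A 0)) =
      fun t => (r ^ t * A t - r ^ (t + 1) * A (t + 1)) - r ^ t * ((1 - r) * A 0) := by
    funext t; ring
  rw [hsplit, (hs.sub hs').tsum_sub ((summable_geometric_of_lt_one hr0 hr1).mul_right _),
    hs.tsum_sub hs', hs.tsum_eq_zero_add, hgeo]
  simp

end Series

section Bounded

variable {α : Type*} [MeasurableSpace α] {μ : Measure α} {f : α → ℝ} {C : ℝ}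

lemma abs_integral_le_of_abs_le [IsProbabilityMeasure μ] (hf : ∀ x, |f x| ≤ C) :
    |∫ x, f x ∂μ| ≤ C := by
  simpa only [Real.norm_eq_abs, probReal_univ, mul_one] using
    norm_integral_le_of_norm_le_const (μ := μ) (f := f) (C := C)
      (Filter.Eventually.of_forall fun x => (Real.norm_eq_abs _).trans_le (hf x))

lemma integrable_of_abs_le [IsFiniteMeasure μ] (hm : Measurable f) (hf : ∀ x, |f x| ≤ C) :
    Integrable f μ :=
  .of_bound hm.aestronglyMeasurable C (Filter.Eventually.of_forall hf)

end Bounded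

section Autocratic

variable {Ω : Type*} [MeasurableSpace Ω]

/-- `ν t` is the joint law of X's move `x_t` and Y's reply `y_t`; `u (x, y) = f x + λ g y` is a
player's payoff from the two half-rounds of round `t`, at times `2t` and `2t + 1`. -/
noncomputable def discountedPayoff (lam : ℝ) (ν : ℕ → Measure (Ω × Ω)) (u : Ω × Ω → ℝ) : ℝ :=
  (1 - lam) * ∑' t : ℕ, lam ^ (2 * t) * ∫ q, u q ∂ν t

variable {σ0 : Measure Ω} {σ : Kernel (Ω × Ω) Ω} [IsMarkovKernel σ] {ν : ℕ → Measure (Ω × Ω)}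
  [∀ t, IsProbabilityMeasure (ν t)]

theorem tsum_integral_autocratic_eq_zero (hν0 : (ν 0).fst = σ0)
    (hν : ∀ t, (ν (t + 1)).fst = σ ∘ₘ ν t) {ψ : Ω → ℝ} (hψ : Measurable ψ) {C : ℝ}
    (hC : ∀ x, |ψ x| ≤ C) {r : ℝ} (hr0 : 0 ≤ r) (hr1 : r < 1) :
    ∑' t, r ^ t * ∫ q, (ψ q.1 - r * ∫ x, ψ x ∂σ q - (1 - r) * ∫ x, ψ x ∂σ0) ∂ν t = 0 := by
  set A : ℕ → ℝ := fun t => ∫ x, ψ x ∂(ν t).fst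
  have hfst : ∀ t, ∫ q, ψ q.1 ∂ν t = A t := fun t =>
    (integral_map measurable_fst.aemeasurable hψ.aestronglyMeasurable).symm
  have hstep : ∀ t, ∫ q, ∫ x, ψ x ∂σ q ∂ν t = A (t + 1) := fun t => by
    simp only [A, hν t]
    exact (integral_comp_eq_integral_integral _ _ (integrable_of_abs_le hψ hC)).symm
  have hterm : ∀ t, ∫ q, (ψ q.1 - r * ∫ x, ψ x ∂σ q - (1 - r) * ∫ x, ψ x ∂σ0) ∂ν t =
      A t - r * A (t + 1) - (1 - r) * A 0 := fun t => by
    have h1 : Integrable (fun q : Ω × Ω => ψ q.1) (ν t) :=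
      integrable_of_abs_le (hψ.comp measurable_fst) fun q => hC q.1
    have h2 : Integrable (fun q => ∫ x, ψ x ∂σ q) (ν t) :=
      integrable_of_abs_le hψ.stronglyMeasurable.integral_kernel.measurable
        fun q => abs_integral_le_of_abs_le hC
    have h3 : Integrable (fun q => ψ q.1 - r * ∫ x, ψ x ∂σ q) (ν t) := h1.sub (h2.const_mul r)
    rw [integral_sub h3 (integrable_const _), integral_sub h1 (h2.const_mul r),
      integral_const_mul, hfst, hstep, integral_const, ← hν0]
    simp [A]
  simp_rw [hterm]
  exact tsum_pow_mul_telescope hr0 hr1 fun t => abs_integral_le_of_abs_le hC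

theorem discountedPayoff_autocratic (hν0 : (ν 0).fst = σ0)
    (hν : ∀ t, (ν (t + 1)).fst = σ ∘ₘ ν t) {lam : ℝ} (hlam0 : 0 ≤ lam) (hlam1 : lam < 1)
    {uX uY : Ω × Ω → ℝ} {ψ : Ω → ℝ} (huX : Measurable uX) (huY : Measurable uY)
    (hψ : Measurable ψ) {C : ℝ} (hCX : ∀ q, |uX q| ≤ C) (hCY : ∀ q, |uY q| ≤ C)
    (hCψ : ∀ x, |ψ x| ≤ C) {α β γ : ℝ}
    (hid : ∀ q, α * uX q + β * uY q + (1 + lam) * γ =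
      ψ q.1 - lam ^ 2 * ∫ x, ψ x ∂σ q - (1 - lam ^ 2) * ∫ x, ψ x ∂σ0) :
    α * discountedPayoff lam ν uX + β * discountedPayoff lam ν uY + γ = 0 := by
  have hr0 : 0 ≤ lam ^ 2 := by positivity
  have hr1 : lam ^ 2 < 1 := by nlinarith
  have hzero := tsum_integral_autocratic_eq_zero hν0 hν hψ hCψ hr0 hr1
  have hsX := summable_pow_mul_of_abs_le hr0 hr1 fun t =>
    abs_integral_le_of_abs_le (μ := ν t) hCX
  have hsY := summable_pow_mul_of_abs_le hr0 hr1 fun t =>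
    abs_integral_le_of_abs_le (μ := ν t) hCY
  have hterm : ∀ t, ∫ q, (ψ q.1 - lam ^ 2 * ∫ x, ψ x ∂σ q - (1 - lam ^ 2) * ∫ x, ψ x ∂σ0) ∂ν t =
      α * ∫ q, uX q ∂ν t + β * ∫ q, uY q ∂ν t + (1 + lam) * γ := fun t => by
    have hX : Integrable uX (ν t) := integrable_of_abs_le huX hCX
    have hY : Integrable uY (ν t) := integrable_of_abs_le huY hCY
    simp_rw [← hid]
    rw [integral_add (f := fun q => α * uX q + β * uY q) ((hX.const_mul α).add (hY.const_mul β))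
        (integrable_const _),
      integral_add (hX.const_mul α) (hY.const_mul β), integral_const_mul, integral_const_mul,
      integral_const]
    simp
  simp_rw [hterm, mul_add, mul_left_comm _ α, mul_left_comm _ β] at hzero
  rw [((hsX.mul_left α).add (hsY.mul_left β)).tsum_add
      ((summable_geometric_of_lt_one hr0 hr1).mul_right _),
    (hsX.mul_left α).tsum_add (hsY.mul_left β), tsum_mul_left, tsum_mul_left, tsum_mul_right,
    tsum_geometric_of_lt_one hr0 hr1] at hzero
  simp only [discountedPayoff, pow_mul]
  have h1 : 1 - lam ^ 2 ≠ 0 := sub_ne_zero.mpr hr1.ne'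
  field_simp at hzero
  refine mul_left_cancel₀ (by linarith : 1 + lam ≠ 0) ?_
  linear_combination hzero

end Autocratic

section TwoPoint

variable {Ω : Type*} [MeasurableSpace Ω] (a₀ a₁ : Ω)

noncomputable def twoPoint (r : ℝ) : Measure Ω :=
  ENNReal.ofReal r • Measure.dirac a₁ + ENNReal.ofReal (1 - r) • Measure.dirac a₀

variable {a₀ a₁}

lemma isProbabilityMeasure_twoPoint {r : ℝ} (hr : r ∈ Set.Icc (0 : ℝ) 1) :
    IsProbabilityMeasure (twoPoint a₀ a₁ r) := by
  constructor
  simp only [twoPoint, Measure.coe_add, Measure.coe_smul, Pi.add_apply, Pi.smul_apply,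
    measure_univ, smul_eq_mul, mul_one]
  rw [← ENNReal.ofReal_add hr.1 (by linarith [hr.2])]
  simp

lemma integral_twoPoint [MeasurableSingletonClass Ω] {E : Type*} [NormedAddCommGroup E]
    [NormedSpace ℝ E] [CompleteSpace E] (f : Ω → E) {r : ℝ} (hr : r ∈ Set.Icc (0 : ℝ) 1) :
    ∫ x, f x ∂twoPoint a₀ a₁ r = r • f a₁ + (1 - r) • f a₀ := by
  rw [twoPoint, integral_add_measure ((integrable_dirac enorm_lt_top).smul_measure
      ENNReal.ofReal_ne_top) ((integrable_dirac enorm_lt_top).smul_measure ENNReal.ofReal_ne_top),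
    integral_smul_measure, integral_smul_measure, integral_dirac, integral_dirac,
    ENNReal.toReal_ofReal hr.1, ENNReal.toReal_ofReal (by linarith [hr.2])]

variable (a₀ a₁)

lemma measurable_twoPoint : Measurable (twoPoint a₀ a₁) :=
  Measure.measurable_of_measurable_coe _ fun s _ => by
    simp only [twoPoint, Measure.coe_add, Measure.coe_smul, Pi.add_apply, Pi.smul_apply,
      smul_eq_mul]
    fun_prop

noncomputable def twoPointKernel {β : Type*} [MeasurableSpace β] {p : β → ℝ}
    (hp : Measurable p) : Kernel β Ω :=
  ⟨fun y => twoPoint a₀ a₁ (p y), (measurable_twoPoint a₀ a₁).comp hp⟩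

@[simp]
lemma twoPointKernel_apply {β : Type*} [MeasurableSpace β] {p : β → ℝ} (hp : Measurable p)
    (y : β) : twoPointKernel a₀ a₁ hp y = twoPoint a₀ a₁ (p y) :=
  rfl

lemma isMarkovKernel_twoPointKernel {β : Type*} [MeasurableSpace β] {p : β → ℝ}
    (hp : Measurable p) (hp01 : ∀ y, p y ∈ Set.Icc (0 : ℝ) 1) :
    IsMarkovKernel (twoPointKernel a₀ a₁ hp) :=
  ⟨fun y => isProbabilityMeasure_twoPoint (hp01 y)⟩

end TwoPoint

section DonationGame

variable {K : ℝ} {b c : ℝ → ℝ}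

lemma donation_reaction_mem_Icc {lam B γ p0 z zK : ℝ} (hlam0 : 0 < lam) (hlam1 : lam < 1)
    (hB : 0 < B) (hz : 0 ≤ z) (hzK : z ≤ zK)
    (hlb : (lam * zK + (1 + lam) * γ) / ((1 - lam ^ 2) * B) - lam ^ 2 / (1 - lam ^ 2) ≤ p0)
    (hub : p0 ≤ γ / ((1 - lam) * B)) :
    (lam * z + (1 + lam) * γ) / (lam ^ 2 * B) - ((1 - lam ^ 2) / lam ^ 2) * p0 ∈
      Set.Icc (0 : ℝ) 1 := by
  have h1 : 0 < 1 - lam := by linarith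
  have h2 : 0 < 1 - lam ^ 2 := by nlinarith
  rw [sub_le_iff_le_add, div_le_iff₀ (by positivity)] at hlb
  rw [le_div_iff₀ (by positivity)] at hub
  have hp : (lam * z + (1 + lam) * γ) / (lam ^ 2 * B) - ((1 - lam ^ 2) / lam ^ 2) * p0 =
      (lam * z + (1 + lam) * γ - (1 - lam ^ 2) * B * p0) / (lam ^ 2 * B) := by
    field_simp
  rw [hp, Set.mem_Icc, div_le_one (by positivity)]
  constructor
  · apply div_nonneg _ (by positivity)
    nlinarith
  · have : (lam ^ 2 / (1 - lam ^ 2) + p0) * ((1 - lam ^ 2) * B) =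
        lam ^ 2 * B + (1 - lam ^ 2) * B * p0 := by field_simp
    nlinarith

lemma MonotoneOn.mem_Icc_of_map_zero {f : ℝ → ℝ} (hf : MonotoneOn f (Set.Icc 0 K)) (h0 : f 0 = 0)
    (s : Set.Icc (0 : ℝ) K) : f s ∈ Set.Icc 0 (f K) := by
  simpa [h0] using hf.mapsTo_Icc s.2

lemma donation_payoffs_abs_le (hbM : MonotoneOn b (Set.Icc 0 K))
    (hcM : MonotoneOn c (Set.Icc 0 K)) (hb0 : b 0 = 0) (hc0 : c 0 = 0) {lam χ : ℝ}
    (hlam0 : 0 ≤ lam) (hlam1 : lam ≤ 1) (hχ : 1 ≤ χ) (x y : Set.Icc (0 : ℝ) K) :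
    |-(c x) + lam * b y| ≤ χ * b K + c K ∧ |b x + lam * (-(c y))| ≤ χ * b K + c K ∧
      |-(χ * b x) - c x| ≤ χ * b K + c K := by
  obtain ⟨hbx, hbxK⟩ := hbM.mem_Icc_of_map_zero hb0 x
  obtain ⟨hcx, hcxK⟩ := hcM.mem_Icc_of_map_zero hc0 x
  obtain ⟨hby, hbyK⟩ := hbM.mem_Icc_of_map_zero hb0 y
  obtain ⟨hcy, hcyK⟩ := hcM.mem_Icc_of_map_zero hc0 y
  refine ⟨abs_le.mpr ⟨?_, ?_⟩, abs_le.mpr ⟨?_, ?_⟩, abs_le.mpr ⟨?_, ?_⟩⟩ <;> nlinarith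

lemma donation_integral_twoPoint (hK : 0 ≤ K) (hb0 : b 0 = 0) (hc0 : c 0 = 0) (χ : ℝ) {r : ℝ}
    (hr : r ∈ Set.Icc (0 : ℝ) 1) :
    ∫ s, (-(χ * b ↑s) - c ↑s) ∂twoPoint (⟨0, Set.left_mem_Icc.mpr hK⟩ : Set.Icc (0 : ℝ) K)
      ⟨K, Set.right_mem_Icc.mpr hK⟩ r = -(r * (χ * b K + c K)) := by
  rw [integral_twoPoint _ hr]
  simp only [hb0, hc0, smul_eq_mul]
  ring

lemma donation_autocratic_identity (hK : 0 ≤ K) (hb0 : b 0 = 0) (hc0 : c 0 = 0)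
    {lam χ γ p0 py : ℝ} (hlam0 : 0 < lam) (hB : 0 < χ * b K + c K) (hp0 : p0 ∈ Set.Icc (0 : ℝ) 1)
    {y : ℝ} (hpy : py = (lam * (b y + χ * c y) + (1 + lam) * γ) /
      (lam ^ 2 * (χ * b K + c K)) - ((1 - lam ^ 2) / lam ^ 2) * p0)
    (hpy01 : py ∈ Set.Icc (0 : ℝ) 1) (x : ℝ) :
    (-(c x) - χ * b x + γ) + lam * (b y + χ * c y + γ) =
      (-(χ * b x) - c x)
        - lam ^ 2 * ∫ s, (-(χ * b ↑s) - c ↑s) ∂twoPoint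
            (⟨0, Set.left_mem_Icc.mpr hK⟩ : Set.Icc (0 : ℝ) K) ⟨K, Set.right_mem_Icc.mpr hK⟩ py
        - (1 - lam ^ 2) * ∫ s, (-(χ * b ↑s) - c ↑s) ∂twoPoint
            (⟨0, Set.left_mem_Icc.mpr hK⟩ : Set.Icc (0 : ℝ) K) ⟨K, Set.right_mem_Icc.mpr hK⟩
            p0 := by
  rw [donation_integral_twoPoint hK hb0 hc0 χ hpy01, donation_integral_twoPoint hK hb0 hc0 χ hp0,
    hpy]
  field_simp
  ring

theorem donation_discountedPayoff_enforce (hK : 0 ≤ K) (hbM : MonotoneOn b (Set.Icc 0 K))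
    (hcM : MonotoneOn c (Set.Icc 0 K)) (hb0 : b 0 = 0) (hc0 : c 0 = 0) {lam χ γ p0 : ℝ}
    (hlam0 : 0 ≤ lam) (hlam1 : lam < 1) (hχ : 1 ≤ χ) {p : Set.Icc (0 : ℝ) K → ℝ}
    (hpm : Measurable p) (hp01 : ∀ y, p y ∈ Set.Icc (0 : ℝ) 1)
    (hid : ∀ x y : Set.Icc (0 : ℝ) K,
      (-(c ↑x) - χ * b ↑x + γ) + lam * (b ↑y + χ * c ↑y + γ) =
        (-(χ * b ↑x) - c ↑x)
          - lam ^ 2 * ∫ s, (-(χ * b ↑s) - c ↑s) ∂twoPoint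
              (⟨0, Set.left_mem_Icc.mpr hK⟩ : Set.Icc (0 : ℝ) K) ⟨K, Set.right_mem_Icc.mpr hK⟩ (p y)
          - (1 - lam ^ 2) * ∫ s, (-(χ * b ↑s) - c ↑s) ∂twoPoint
              (⟨0, Set.left_mem_Icc.mpr hK⟩ : Set.Icc (0 : ℝ) K) ⟨K, Set.right_mem_Icc.mpr hK⟩ p0)
    {ν : ℕ → Measure (Set.Icc (0 : ℝ) K × Set.Icc (0 : ℝ) K)} [∀ t, IsProbabilityMeasure (ν t)]
    (hν0 : ∀ E, MeasurableSet E → ν 0 (E ×ˢ Set.univ) =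
      twoPoint ⟨0, Set.left_mem_Icc.mpr hK⟩ ⟨K, Set.right_mem_Icc.mpr hK⟩ p0 E)
    (hν : ∀ t E, MeasurableSet E → ν (t + 1) (E ×ˢ Set.univ) =
      ∫⁻ q, twoPoint ⟨0, Set.left_mem_Icc.mpr hK⟩ ⟨K, Set.right_mem_Icc.mpr hK⟩ (p q.2) E ∂ν t) :
    discountedPayoff lam ν (fun q => -(c ↑q.1) + lam * b ↑q.2)
      - χ * discountedPayoff lam ν (fun q => b ↑q.1 + lam * (-(c ↑q.2))) + γ = 0 := by
  have hbm := (Set.monotoneOn_iff_monotone.mp hbM).measurable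
  have hcm := (Set.monotoneOn_iff_monotone.mp hcM).measurable
  have hpm₂ : Measurable fun q : Set.Icc (0 : ℝ) K × Set.Icc (0 : ℝ) K => p q.2 :=
    hpm.comp measurable_snd
  have : IsMarkovKernel (twoPointKernel (⟨0, Set.left_mem_Icc.mpr hK⟩ : Set.Icc (0 : ℝ) K)
      ⟨K, Set.right_mem_Icc.mpr hK⟩ hpm₂) :=
    isMarkovKernel_twoPointKernel _ _ _ fun q => hp01 q.2
  have hbound := donation_payoffs_abs_le hbM hcM hb0 hc0 hlam0 hlam1.le hχ
  have key := discountedPayoff_autocratic (σ := twoPointKernel _ _ hpm₂)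
    (Measure.fst_eq_of_apply_prod_univ hν0)
    (fun t => Measure.fst_eq_comp_of_apply_prod_univ (hν t)) hlam0 hlam1
    (uX := fun q => -(c ↑q.1) + lam * b ↑q.2) (uY := fun q => b ↑q.1 + lam * (-(c ↑q.2)))
    (ψ := fun s => -(χ * b ↑s) - c ↑s)
    ((hcm.comp measurable_fst).neg.add ((hbm.comp measurable_snd).const_mul lam))
    ((hbm.comp measurable_fst).add ((hcm.comp measurable_snd).neg.const_mul lam))
    ((hbm.const_mul χ).neg.sub hcm)
    (fun q => (hbound q.1 q.2).1) (fun q => (hbound q.1 q.2).2.1) (fun x => (hbound x x).2.2)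
    (α := 1) (β := -χ) (γ := γ) fun q => by
      rw [twoPointKernel_apply]
      linear_combination hid q.1 q.2
  linear_combination key

end DonationGame

theorem stmt_13_general
    (K : ℝ) (hK : 0 < K) (b c : ℝ → ℝ)
    (hbM : MonotoneOn b (Set.Icc 0 K)) (hcM : MonotoneOn c (Set.Icc 0 K))
    (hb0 : b 0 = 0) (hc0 : c 0 = 0)
    (hcpos : ∀ s ∈ Set.Ioc (0 : ℝ) K, 0 < c s)
    (lam : ℝ) (hlam0 : 0 < lam) (hlam1 : lam < 1)
    (χ : ℝ) (hχ : 1 ≤ χ)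
    (κX κY γ : ℝ) (hγ : γ = χ * κY - κX)
    (p0 : ℝ)
    (hp0lb : max ((lam * (b K + χ * c K) + (1 + lam) * γ) /
        ((1 - lam ^ 2) * (χ * b K + c K)) - lam ^ 2 / (1 - lam ^ 2)) 0 ≤ p0)
    (hp0ub : p0 ≤ min (γ / ((1 - lam) * (χ * b K + c K))) 1)
    (p : Set.Icc (0 : ℝ) K → ℝ)
    (hp : ∀ y : Set.Icc (0 : ℝ) K,
      p y = (lam * (b ↑y + χ * c ↑y) + (1 + lam) * γ) /
          (lam ^ 2 * (χ * b K + c K)) - ((1 - lam ^ 2) / lam ^ 2) * p0)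
    (σX0 : Measure (Set.Icc (0 : ℝ) K))
    (hσX0 : σX0 =
      ENNReal.ofReal p0 • Measure.dirac (⟨K, Set.right_mem_Icc.mpr hK.le⟩ : Set.Icc (0 : ℝ) K)
        + ENNReal.ofReal (1 - p0) • Measure.dirac (⟨0, Set.left_mem_Icc.mpr hK.le⟩ : Set.Icc (0 : ℝ) K))
    (σX : Set.Icc (0 : ℝ) K × Set.Icc (0 : ℝ) K → Measure (Set.Icc (0 : ℝ) K))
    (hσX : ∀ q : Set.Icc (0 : ℝ) K × Set.Icc (0 : ℝ) K, σX q =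
      ENNReal.ofReal (p q.2) • Measure.dirac (⟨K, Set.right_mem_Icc.mpr hK.le⟩ : Set.Icc (0 : ℝ) K)
        + ENNReal.ofReal (1 - p q.2) • Measure.dirac (⟨0, Set.left_mem_Icc.mpr hK.le⟩ : Set.Icc (0 : ℝ) K)) :
    (∀ y : Set.Icc (0 : ℝ) K, 0 ≤ p y ∧ p y ≤ 1) ∧
    (∀ x y : Set.Icc (0 : ℝ) K,
      (-(c ↑x) - χ * b ↑x + γ) + lam * (b ↑y + χ * c ↑y + γ) =
        (-(χ * b ↑x) - c ↑x)
          - lam ^ 2 * (∫ s, (-(χ * b ↑s) - c ↑s) ∂(σX (x, y)))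
          - (1 - lam ^ 2) * (∫ s, (-(χ * b ↑s) - c ↑s) ∂σX0)) ∧
    (∀ ν : ℕ → Measure (Set.Icc (0 : ℝ) K × Set.Icc (0 : ℝ) K),
      (∀ t, IsProbabilityMeasure (ν t)) →
      (∀ E : Set (Set.Icc (0 : ℝ) K), MeasurableSet E →
        ν 0 (E ×ˢ Set.univ) = σX0 E) →
      (∀ (t : ℕ) (E : Set (Set.Icc (0 : ℝ) K)), MeasurableSet E →
        ν (t + 1) (E ×ˢ Set.univ) = ∫⁻ q, σX q E ∂(ν t)) →
      ((1 - lam) * ∑' t : ℕ, lam ^ (2 * t) *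
          ∫ q, (-(c ↑q.1) + lam * b ↑q.2) ∂(ν t)) - κX =
        χ * (((1 - lam) * ∑' t : ℕ, lam ^ (2 * t) *
          ∫ q, (b ↑q.1 + lam * (-(c ↑q.2))) ∂(ν t)) - κY)) := by
  have hbI := hbM.mem_Icc_of_map_zero hb0
  have hcI := hcM.mem_Icc_of_map_zero hc0
  have hχ0 : 0 ≤ χ := zero_le_one.trans hχ
  have hB : 0 < χ * b K + c K := by
    nlinarith [hcpos K ⟨hK, le_rfl⟩, (hbI ⟨K, Set.right_mem_Icc.mpr hK.le⟩).1]
  have hp01 : ∀ y, p y ∈ Set.Icc (0 : ℝ) 1 := fun y => hp y ▸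
    donation_reaction_mem_Icc hlam0 hlam1 hB (by linarith [(hbI y).1, mul_nonneg hχ0 (hcI y).1])
      (by linarith [(hbI y).2, mul_le_mul_of_nonneg_left (hcI y).2 hχ0])
      ((le_max_left _ _).trans hp0lb) (hp0ub.trans (min_le_left _ _))
  have hp0 : p0 ∈ Set.Icc (0 : ℝ) 1 :=
    ⟨(le_max_right _ _).trans hp0lb, hp0ub.trans (min_le_right _ _)⟩
  have hidentity := fun x y : Set.Icc (0 : ℝ) K =>
    donation_autocratic_identity hK.le hb0 hc0 hlam0 hB hp0 (hp y) (hp01 y) x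
  refine ⟨hp01, fun x y => by rw [hσX, hσX0]; exact hidentity x y, fun ν _ hν0 hν => ?_⟩
  have hpm : Measurable p := by
    simp only [funext hp]
    exact ((((Set.monotoneOn_iff_monotone.mp hbM).measurable.add
      ((Set.monotoneOn_iff_monotone.mp hcM).measurable.const_mul χ)).const_mul lam).add_const _
        |>.div_const _).sub_const _
  have key := donation_discountedPayoff_enforce hK.le hbM hcM hb0 hc0 hlam0.le hlam1 hχ hpm hp01
    hidentity (by rwa [hσX0] at hν0) (by simp only [hσX] at hν; exact hν)
  unfold discountedPayoff at key
  linear_combination key - hγ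

/-- Two-point extortionate/generous strategies in the strictly-alternating
continuous Donation Game in which `X` moves first: under the stated conditions
on `λ`, `χ`, `κ_X`, `κ_Y`, `γ = χκ_Y − κ_X` and `p₀`, the reaction
probabilities `p(y)` lie in `[0,1]`, the two-point strategy
`σX0 = p₀ δ_K + (1−p₀) δ_0`, `σX[x,y] = p(y) δ_K + (1−p(y)) δ_0` satisfies the
autocratic identity with `ψ(s) = −χ b(s) − c(s)`, and consequently it
unilaterally enforces `π_X − κ_X = χ (π_Y − κ_Y)` for every strategy of player
`Y` (i.e. for every consistent play distribution). -/
theorem stmt_13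
    (K : ℝ) (hK : 0 < K) (b c : ℝ → ℝ)
    (hbC : ContinuousOn b (Set.Icc 0 K)) (hcC : ContinuousOn c (Set.Icc 0 K))
    (hbM : MonotoneOn b (Set.Icc 0 K)) (hcM : MonotoneOn c (Set.Icc 0 K))
    (hb0 : b 0 = 0) (hc0 : c 0 = 0)
    (hcb : ∀ s ∈ Set.Ioc (0 : ℝ) K, c s < b s)
    (hcpos : ∀ s ∈ Set.Ioc (0 : ℝ) K, 0 < c s)
    (lam : ℝ) (hlam0 : 0 < lam) (hlam1 : lam < 1)
    (χ : ℝ) (hχ : 1 ≤ χ)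
    (hlamge : (b K + χ * c K) / (χ * b K + c K) ≤ lam)
    (κX κY γ : ℝ) (hγ : γ = χ * κY - κX)
    (hκ1 : κX ≤ χ * κY)
    (hκ2 : χ * κY ≤ κX +
      (χ * ((b K - lam * c K) / (1 + lam)) - (lam * b K - c K) / (1 + lam)))
    (p0 : ℝ)
    (hp0lb : max ((lam * (b K + χ * c K) + (1 + lam) * γ) /
        ((1 - lam ^ 2) * (χ * b K + c K)) - lam ^ 2 / (1 - lam ^ 2)) 0 ≤ p0)
    (hp0ub : p0 ≤ min (γ / ((1 - lam) * (χ * b K + c K))) 1)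
    (p : Set.Icc (0 : ℝ) K → ℝ)
    (hp : ∀ y : Set.Icc (0 : ℝ) K,
      p y = (lam * (b ↑y + χ * c ↑y) + (1 + lam) * γ) /
          (lam ^ 2 * (χ * b K + c K)) - ((1 - lam ^ 2) / lam ^ 2) * p0)
    (σX0 : Measure (Set.Icc (0 : ℝ) K))
    (hσX0 : σX0 =
      ENNReal.ofReal p0 • Measure.dirac (⟨K, Set.right_mem_Icc.mpr hK.le⟩ : Set.Icc (0 : ℝ) K)
        + ENNReal.ofReal (1 - p0) • Measure.dirac (⟨0, Set.left_mem_Icc.mpr hK.le⟩ : Set.Icc (0 : ℝ) K))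
    (σX : Set.Icc (0 : ℝ) K × Set.Icc (0 : ℝ) K → Measure (Set.Icc (0 : ℝ) K))
    (hσX : ∀ q : Set.Icc (0 : ℝ) K × Set.Icc (0 : ℝ) K, σX q =
      ENNReal.ofReal (p q.2) • Measure.dirac (⟨K, Set.right_mem_Icc.mpr hK.le⟩ : Set.Icc (0 : ℝ) K)
        + ENNReal.ofReal (1 - p q.2) • Measure.dirac (⟨0, Set.left_mem_Icc.mpr hK.le⟩ : Set.Icc (0 : ℝ) K)) :
    (∀ y : Set.Icc (0 : ℝ) K, 0 ≤ p y ∧ p y ≤ 1) ∧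
    (∀ x y : Set.Icc (0 : ℝ) K,
      (-(c ↑x) - χ * b ↑x + γ) + lam * (b ↑y + χ * c ↑y + γ) =
        (-(χ * b ↑x) - c ↑x)
          - lam ^ 2 * (∫ s, (-(χ * b ↑s) - c ↑s) ∂(σX (x, y)))
          - (1 - lam ^ 2) * (∫ s, (-(χ * b ↑s) - c ↑s) ∂σX0)) ∧
    (∀ ν : ℕ → Measure (Set.Icc (0 : ℝ) K × Set.Icc (0 : ℝ) K),
      (∀ t, IsProbabilityMeasure (ν t)) →
      (∀ E : Set (Set.Icc (0 : ℝ) K), MeasurableSet E →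
        ν 0 (E ×ˢ Set.univ) = σX0 E) →
      (∀ (t : ℕ) (E : Set (Set.Icc (0 : ℝ) K)), MeasurableSet E →
        ν (t + 1) (E ×ˢ Set.univ) = ∫⁻ q, σX q E ∂(ν t)) →
      ((1 - lam) * ∑' t : ℕ, lam ^ (2 * t) *
          ∫ q, (-(c ↑q.1) + lam * b ↑q.2) ∂(ν t)) - κX =
        χ * (((1 - lam) * ∑' t : ℕ, lam ^ (2 * t) *
          ∫ q, (b ↑q.1 + lam * (-(c ↑q.2))) ∂(ν t)) - κY)) :=
  stmt_13_general K hK b c hbM hcM hb0 hc0 hcpos lam hlam0 hlam1 χ hχ κX κY γ hγ p0 hp0lb hp0ub p hp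
    σX0 hσX0 σX hσX
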